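/- (Robustness of the one-step functional to the missingness propensity.) In the capture-recapture setup, assume MAR and positivity, and let π̄(y,v) > 0 be an arbitrary candidate missingness propensity. Take the candidate conditional probabilities equal to the truth: q̄_y(v,x) = q_y(v,x) and q̄_y(v) = q_y(v) for all y ≠ 0 and all (v,x) in the support. With 1/γ(v,x) = 1 + Π_{y ≠ 0} q_y(v,x)^{(−1)^{|y|+1}}, m(v) = E_Q[ 1/γ(V,X) − 1 | V=v ], and φ̃(z) = Σ_{y' ≠ 0} (−1)^{1+|y'|} { (r·1(y=y') / π̄(y',v)) · [ (1/q_{y'}(v,x))(1/γ(v,x) − 1) − (1/q_{y'}(v)) m(v) ] + (1(y=y')/q_{y'}(v)) m(v) } for z = (y,v,x,r) with y ≠ 0, it holds that E_Q[ φ̃(Y,V,X,R) ] = E_Q[ 1/γ(V,X) − 1 ], i.e., the remainder vanishes regardless of the choice of π̄. -/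

import Mathlib

open scoped Classical
open Finset

/-- Probability `P(A)` of an event `A` under a probability weight `w` on a finite
outcome space `Ω`. -/
noncomputable def pr {Ω : Type*} [Fintype Ω] (w : Ω → ℝ) (A : Ω → Prop) : ℝ :=
  ∑ ω, if A ω then w ω else 0

/-- Conditional probability `P(A | B)` under the weight `w`. -/
noncomputable def cpr {Ω : Type*} [Fintype Ω] (w : Ω → ℝ) (A B : Ω → Prop) : ℝ :=
  pr w (fun ω => A ω ∧ B ω) / pr w B

/-- Conditional expectation `E[f | B]` under the weight `w`. -/
noncomputable def cexp {Ω : Type*} [Fintype Ω] (w : Ω → ℝ) (f : Ω → ℝ) (B : Ω → Prop) : ℝ :=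
  (∑ ω, if B ω then w ω * f ω else 0) / pr w B

/-- Full conditional q-probability `q_y(v,x) = Q(Y = y | V = v, X = x)`, where `Q` is the
law of the data conditional on capture (`Y ≠ 0`). -/
noncomputable def qfull {Ω 𝒱 𝒳 : Type*} [Fintype Ω] {K : ℕ}
    (w : Ω → ℝ) (Y : Ω → Finset (Fin K)) (V : Ω → 𝒱) (X : Ω → 𝒳)
    (y : Finset (Fin K)) (v : 𝒱) (x : 𝒳) : ℝ :=
  cpr w (fun ω => Y ω = y) (fun ω => V ω = v ∧ X ω = x ∧ Y ω ≠ ∅)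

/-- `V`-only conditional q-probability `q_y(v) = Q(Y = y | V = v)`. -/
noncomputable def qV {Ω 𝒱 : Type*} [Fintype Ω] {K : ℕ}
    (w : Ω → ℝ) (Y : Ω → Finset (Fin K)) (V : Ω → 𝒱)
    (y : Finset (Fin K)) (v : 𝒱) : ℝ :=
  cpr w (fun ω => Y ω = y) (fun ω => V ω = v ∧ Y ω ≠ ∅)

/-- Covariate distribution among the fully observed,
`λ_x(y,v) = Q(X = x | Y = y, V = v, R = 1)`. -/
noncomputable def lam {Ω 𝒱 𝒳 : Type*} [Fintype Ω] {K : ℕ}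
    (w : Ω → ℝ) (Y : Ω → Finset (Fin K)) (V : Ω → 𝒱) (X : Ω → 𝒳) (R : Ω → Bool)
    (x : 𝒳) (y : Finset (Fin K)) (v : 𝒱) : ℝ :=
  cpr w (fun ω => X ω = x) (fun ω => Y ω = y ∧ V ω = v ∧ R ω = true ∧ Y ω ≠ ∅)

/-- Missingness propensity score `π(y,v) = Q(R = 1 | Y = y, V = v)`. -/
noncomputable def piR {Ω 𝒱 : Type*} [Fintype Ω] {K : ℕ}
    (w : Ω → ℝ) (Y : Ω → Finset (Fin K)) (V : Ω → 𝒱) (R : Ω → Bool)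
    (y : Finset (Fin K)) (v : 𝒱) : ℝ :=
  cpr w (fun ω => R ω = true) (fun ω => Y ω = y ∧ V ω = v ∧ Y ω ≠ ∅)


/-!
By MAR, `E_Q[R 1(Y = y) F(V,X)] = E_Q[π(y,V) q_y(V,X) F(V,X)]`, so the inverse-weighted part of
the `y`-th summand has mean `E_Q[(π/π̄)(y,V) ((1/γ - 1) - m(V) q_y(V,X) / q_y(V))]`. This vanishes
for every `π̄`, because `E_Q[1/γ - 1 | V] = m(V)` and `E_Q[q_y(V,X) | V] = q_y(V)`. The remaining
summands have mean `(-1)^(1+|y|) E_Q[m(V)]`, and `∑_{y ≠ 0} (-1)^(1+|y|) = 1`, leaving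
`E_Q[m(V)] = E_Q[1/γ - 1]`.
-/

noncomputable def wsum {Ω : Type*} [Fintype Ω] (w : Ω → ℝ) (C : Ω → Prop) (f : Ω → ℝ) : ℝ :=
  ∑ ω, if C ω then w ω * f ω else 0

theorem sum_filter_ne_empty_neg_one_pow_one_add_card {α R : Type*} [Fintype α] [DecidableEq α]
    [Nonempty α] [Ring R] :
    ∑ s ∈ univ.filter (fun s : Finset α => s ≠ ∅), (-1 : R) ^ (1 + #s) = 1 := by
  have hsum : ∑ s : Finset α, (-1 : R) ^ #s = 0 := by
    have := congrArg (Int.cast : ℤ → R)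
      (sum_powerset_neg_one_pow_card_of_nonempty (univ_nonempty (α := α)))
    simpa [powerset_univ] using this
  simp_rw [filter_ne', sum_erase_eq_sub (mem_univ _), pow_add, pow_one, ← mul_sum, hsum]
  simp

section WeightedSum

variable {Ω κ : Type*} [Fintype Ω] {w : Ω → ℝ} {A B C D : Ω → Prop} {f f' : Ω → ℝ}

theorem cexp_eq_wsum_div (w : Ω → ℝ) (f : Ω → ℝ) (B : Ω → Prop) :
    cexp w f B = wsum w B f / pr w B := rfl

theorem pr_eq_wsum_one (w : Ω → ℝ) (A : Ω → Prop) : pr w A = wsum w A (fun _ => 1) := by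
  simp [pr, wsum]

theorem pr_congr (h : ∀ ω, A ω ↔ B ω) : pr w A = pr w B := by
  simp only [pr, h]

theorem pr_nonneg (hw0 : ∀ ω, 0 ≤ w ω) : 0 ≤ pr w A :=
  sum_nonneg fun ω _ => by split_ifs <;> simp [hw0 ω]

theorem pr_pos_of_mem (hw0 : ∀ ω, 0 ≤ w ω) {ω : Ω} (hω : 0 < w ω) (hA : A ω) : 0 < pr w A :=
  hω.trans_le <| by
    simpa [hA, pr] using single_le_sum (f := fun ω => if A ω then w ω else 0)
      (fun i _ => by split_ifs <;> simp [hw0 i]) (mem_univ ω)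

theorem wsum_congr (hw0 : ∀ ω, 0 ≤ w ω) (h : ∀ ω, 0 < w ω → C ω → f ω = f' ω) :
    wsum w C f = wsum w C f' :=
  sum_congr rfl fun ω _ => by
    split_ifs with hC
    · rcases (hw0 ω).eq_or_lt with hw | hw
      · simp [← hw]
      · rw [h ω hw hC]
    · rfl

theorem wsum_add (w : Ω → ℝ) (C : Ω → Prop) (f f' : Ω → ℝ) :
    wsum w C (fun ω => f ω + f' ω) = wsum w C f + wsum w C f' := by
  simp only [wsum, ← sum_add_distrib]
  exact sum_congr rfl fun ω _ => by split_ifs <;> ring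

theorem wsum_sub (w : Ω → ℝ) (C : Ω → Prop) (f f' : Ω → ℝ) :
    wsum w C (fun ω => f ω - f' ω) = wsum w C f - wsum w C f' := by
  simp only [wsum, ← sum_sub_distrib]
  exact sum_congr rfl fun ω _ => by split_ifs <;> ring

theorem wsum_const_mul (w : Ω → ℝ) (C : Ω → Prop) (a : ℝ) (f : Ω → ℝ) :
    wsum w C (fun ω => a * f ω) = a * wsum w C f := by
  simp only [wsum, mul_sum]
  exact sum_congr rfl fun ω _ => by split_ifs <;> ring

theorem wsum_sum {ι : Type*} (w : Ω → ℝ) (C : Ω → Prop) (s : Finset ι) (f : ι → Ω → ℝ) :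
    wsum w C (fun ω => ∑ i ∈ s, f i ω) = ∑ i ∈ s, wsum w C (f i) := by
  simp only [wsum, mul_sum]
  rw [sum_comm]
  exact sum_congr rfl fun ω _ => by split_ifs <;> simp

theorem wsum_eq_zero_of_pr_eq_zero (hw0 : ∀ ω, 0 ≤ w ω) (hCD : ∀ ω, C ω → D ω)
    (h : pr w D = 0) : wsum w C f = 0 := by
  have hw : ∀ ω, D ω → w ω = 0 := fun ω hD =>
    le_antisymm (not_lt.mp fun hω => (pr_pos_of_mem hw0 hω hD).ne' h) (hw0 ω)
  refine sum_eq_zero fun ω _ => ?_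
  split_ifs with hC
  · simp [hw ω (hCD ω hC)]
  · rfl

theorem pr_and_eq_cpr_mul (hw0 : ∀ ω, 0 ≤ w ω) :
    pr w (fun ω => A ω ∧ B ω) = cpr w A B * pr w B := by
  rcases eq_or_ne (pr w B) 0 with h | h
  · rw [h, mul_zero, pr_eq_wsum_one]
    exact wsum_eq_zero_of_pr_eq_zero hw0 (fun _ => And.right) h
  · exact (div_mul_cancel₀ _ h).symm

theorem wsum_eq_cexp_mul_pr (hw0 : ∀ ω, 0 ≤ w ω) : wsum w B f = cexp w f B * pr w B := by
  rcases eq_or_ne (pr w B) 0 with h | h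
  · rw [h, mul_zero]
    exact wsum_eq_zero_of_pr_eq_zero hw0 (fun _ => id) h
  · exact (div_mul_cancel₀ _ h).symm

theorem wsum_and_comp_eq (g : Ω → κ) (F : κ → ℝ) (p : κ) :
    wsum w (fun ω => C ω ∧ g ω = p) (fun ω => F (g ω)) = F p * pr w (fun ω => C ω ∧ g ω = p) := by
  simp only [wsum, pr, mul_sum]
  refine sum_congr rfl fun ω _ => ?_
  split_ifs with h
  · simp [h.2, mul_comm]
  · simp

theorem wsum_comp_mul_eq_sum_image (g : Ω → κ) (c : κ → ℝ) (f : Ω → ℝ) :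
    wsum w C (fun ω => c (g ω) * f ω)
      = ∑ p ∈ univ.image g, c p * wsum w (fun ω => C ω ∧ g ω = p) f := by
  rw [wsum, ← sum_fiberwise_of_maps_to (fun ω _ => mem_image_of_mem g (mem_univ ω))]
  refine sum_congr rfl fun p _ => ?_
  simp only [wsum, mul_sum, sum_filter]
  exact sum_congr rfl fun ω _ => by split_ifs <;> simp_all [mul_left_comm]

theorem wsum_comp_mul_congr (g : Ω → κ) (c : κ → ℝ)
    (h : ∀ p, wsum w (fun ω => C ω ∧ g ω = p) f = wsum w (fun ω => D ω ∧ g ω = p) f') :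
    wsum w C (fun ω => c (g ω) * f ω) = wsum w D (fun ω => c (g ω) * f' ω) := by
  simp only [wsum_comp_mul_eq_sum_image, h]

theorem wsum_comp_eq_of_pr_eq (g : Ω → κ) (F a : κ → ℝ)
    (h : ∀ p, pr w (fun ω => C ω ∧ g ω = p) = a p * pr w (fun ω => D ω ∧ g ω = p)) :
    wsum w C (fun ω => F (g ω)) = wsum w D (fun ω => a (g ω) * F (g ω)) := by
  have := wsum_comp_mul_congr (w := w) (C := C) (D := D) (f := fun _ => 1)
    (f' := fun ω => a (g ω)) g F fun p => by
      rw [wsum_and_comp_eq g a p, ← h p, pr_eq_wsum_one]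
  simpa [mul_comm] using this

theorem wsum_comp_mul_eq_wsum_comp_mul_cexp (hw0 : ∀ ω, 0 ≤ w ω) (g : Ω → κ) (c : κ → ℝ)
    (f : Ω → ℝ) :
    wsum w C (fun ω => c (g ω) * f ω)
      = wsum w C (fun ω => c (g ω) * cexp w f (fun ω' => g ω' = g ω ∧ C ω')) := by
  refine wsum_comp_mul_congr g c fun p => ?_
  rw [wsum_and_comp_eq g (fun p => cexp w f (fun ω' => g ω' = p ∧ C ω')) p,
    wsum_eq_cexp_mul_pr hw0]
  simp only [and_comm]

end WeightedSum

section CaptureRecapture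

variable {Ω 𝒱 𝒳 : Type*} [Fintype Ω] {K : ℕ} {w : Ω → ℝ} {Y : Ω → Finset (Fin K)} {V : Ω → 𝒱}
  {X : Ω → 𝒳} {R : Ω → Bool} {y : Finset (Fin K)}

theorem wsum_eq_wsum_qfull_mul (hw0 : ∀ ω, 0 ≤ w ω) (hy : y ≠ ∅) (F : 𝒱 → 𝒳 → ℝ) :
    wsum w (fun ω => Y ω = y) (fun ω => F (V ω) (X ω))
      = wsum w (fun ω => Y ω ≠ ∅) (fun ω => qfull w Y V X y (V ω) (X ω) * F (V ω) (X ω)) :=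
  wsum_comp_eq_of_pr_eq (fun ω => (V ω, X ω)) (fun p => F p.1 p.2)
    (fun p => qfull w Y V X y p.1 p.2)
    fun ⟨v, x⟩ => by
      rw [pr_congr (B := fun ω => Y ω = y ∧ V ω = v ∧ X ω = x ∧ Y ω ≠ ∅) (by aesop),
        pr_and_eq_cpr_mul hw0]
      exact congrArg _ (pr_congr (by aesop))

theorem wsum_eq_wsum_qV_mul (hw0 : ∀ ω, 0 ≤ w ω) (hy : y ≠ ∅) (F : 𝒱 → ℝ) :
    wsum w (fun ω => Y ω = y) (fun ω => F (V ω))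
      = wsum w (fun ω => Y ω ≠ ∅) (fun ω => qV w Y V y (V ω) * F (V ω)) :=
  wsum_comp_eq_of_pr_eq V F (qV w Y V y) fun v => by
    rw [pr_congr (B := fun ω => Y ω = y ∧ V ω = v ∧ Y ω ≠ ∅) (by aesop),
      pr_and_eq_cpr_mul hw0]
    exact congrArg _ (pr_congr (by aesop))

theorem wsum_and_eq_wsum_piR_mul (hw0 : ∀ ω, 0 ≤ w ω) (hy : y ≠ ∅)
    (hMAR : ∀ (v : 𝒱) (x : 𝒳), 0 < pr w (fun ω => Y ω = y ∧ V ω = v ∧ Y ω ≠ ∅) →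
      cpr w (fun ω => X ω = x ∧ R ω = true) (fun ω => Y ω = y ∧ V ω = v ∧ Y ω ≠ ∅)
        = cpr w (fun ω => X ω = x) (fun ω => Y ω = y ∧ V ω = v ∧ Y ω ≠ ∅)
          * cpr w (fun ω => R ω = true) (fun ω => Y ω = y ∧ V ω = v ∧ Y ω ≠ ∅))
    (F : 𝒱 → 𝒳 → ℝ) :
    wsum w (fun ω => Y ω = y ∧ R ω = true) (fun ω => F (V ω) (X ω))
      = wsum w (fun ω => Y ω = y) (fun ω => piR w Y V R y (V ω) * F (V ω) (X ω)) :=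
  wsum_comp_eq_of_pr_eq (fun ω => (V ω, X ω)) (fun p => F p.1 p.2) (fun p => piR w Y V R y p.1)
    fun ⟨v, x⟩ => by
      set B : Ω → Prop := fun ω => Y ω = y ∧ V ω = v ∧ Y ω ≠ ∅
      have hL : pr w (fun ω => (Y ω = y ∧ R ω = true) ∧ (V ω, X ω) = (v, x))
          = pr w (fun ω => (X ω = x ∧ R ω = true) ∧ B ω) :=
        pr_congr fun ω => by simp only [B, Prod.mk.injEq]; aesop
      have hR : pr w (fun ω => Y ω = y ∧ (V ω, X ω) = (v, x))
          = pr w (fun ω => X ω = x ∧ B ω) :=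
        pr_congr fun ω => by simp only [B, Prod.mk.injEq]; aesop
      rw [hL, hR]
      rcases (pr_nonneg hw0 (A := B)).eq_or_lt with hB | hB
      · simp only [pr_eq_wsum_one, wsum_eq_zero_of_pr_eq_zero hw0 (fun _ => And.right) hB.symm,
          mul_zero]
      · rw [pr_and_eq_cpr_mul hw0, pr_and_eq_cpr_mul (A := fun ω => X ω = x) hw0, hMAR v x hB,
          piR]
        ring

theorem pr_support_pos (hw0 : ∀ ω, 0 ≤ w ω) {ω : Ω} (hω : 0 < w ω) (hS : Y ω ≠ ∅) :
    0 < pr w (fun ω' => V ω' = V ω ∧ X ω' = X ω ∧ Y ω' ≠ ∅) :=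
  pr_pos_of_mem hw0 hω ⟨rfl, rfl, hS⟩

theorem wsum_ipw_term_eq_zero (hw0 : ∀ ω, 0 ≤ w ω) (hy : y ≠ ∅)
    (hMAR : ∀ (v : 𝒱) (x : 𝒳), 0 < pr w (fun ω => Y ω = y ∧ V ω = v ∧ Y ω ≠ ∅) →
      cpr w (fun ω => X ω = x ∧ R ω = true) (fun ω => Y ω = y ∧ V ω = v ∧ Y ω ≠ ∅)
        = cpr w (fun ω => X ω = x) (fun ω => Y ω = y ∧ V ω = v ∧ Y ω ≠ ∅)
          * cpr w (fun ω => R ω = true) (fun ω => Y ω = y ∧ V ω = v ∧ Y ω ≠ ∅))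
    (hq : ∀ (v : 𝒱) (x : 𝒳), 0 < pr w (fun ω => V ω = v ∧ X ω = x ∧ Y ω ≠ ∅) →
      0 < qfull w Y V X y v x ∧ 0 < qV w Y V y v)
    (pib : 𝒱 → ℝ)
    (hpib : ∀ (v : 𝒱) (x : 𝒳), 0 < pr w (fun ω => V ω = v ∧ X ω = x ∧ Y ω ≠ ∅) → 0 < pib v)
    (f : 𝒱 → 𝒳 → ℝ) (m : 𝒱 → ℝ)
    (hm : ∀ v, m v = cexp w (fun ω => f (V ω) (X ω)) (fun ω => V ω = v ∧ Y ω ≠ ∅)) :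
    wsum w (fun ω => Y ω ≠ ∅) (fun ω =>
      ((if R ω = true then (1 : ℝ) else 0) * (if Y ω = y then (1 : ℝ) else 0)) / pib (V ω) *
        ((1 / qfull w Y V X y (V ω) (X ω)) * f (V ω) (X ω) - (1 / qV w Y V y (V ω)) * m (V ω)))
      = 0 := by
  set c : 𝒱 → ℝ := fun v => piR w Y V R y v / pib v
  have hfm : wsum w (fun ω => Y ω ≠ ∅) (fun ω => c (V ω) * f (V ω) (X ω))
      = wsum w (fun ω => Y ω ≠ ∅) (fun ω => c (V ω) * m (V ω)) := by
    rw [wsum_comp_mul_eq_wsum_comp_mul_cexp hw0 V c]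
    simp only [← hm]
  have hqm : wsum w (fun ω => Y ω ≠ ∅)
        (fun ω => qfull w Y V X y (V ω) (X ω) * (c (V ω) * m (V ω) / qV w Y V y (V ω)))
      = wsum w (fun ω => Y ω ≠ ∅) (fun ω => c (V ω) * m (V ω)) := by
    rw [← wsum_eq_wsum_qfull_mul hw0 hy (fun v _ => c v * m v / qV w Y V y v),
      wsum_eq_wsum_qV_mul hw0 hy (fun v => c v * m v / qV w Y V y v)]
    refine wsum_congr hw0 fun ω hω hS => ?_
    have := (hq _ _ (pr_support_pos hw0 hω hS)).2
    field_simp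
  calc _ = wsum w (fun ω => Y ω = y ∧ R ω = true) (fun ω => 1 / pib (V ω) *
        ((1 / qfull w Y V X y (V ω) (X ω)) * f (V ω) (X ω)
          - (1 / qV w Y V y (V ω)) * m (V ω))) := by
        refine sum_congr rfl fun ω _ => ?_
        by_cases hY : Y ω = y <;> by_cases hR : R ω = true <;> simp [hY, hR, hy]
    _ = wsum w (fun ω => Y ω ≠ ∅) (fun ω => qfull w Y V X y (V ω) (X ω) *
        (piR w Y V R y (V ω) * (1 / pib (V ω) * ((1 / qfull w Y V X y (V ω) (X ω)) *
          f (V ω) (X ω) - (1 / qV w Y V y (V ω)) * m (V ω))))) := by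
        rw [wsum_and_eq_wsum_piR_mul hw0 hy hMAR (fun v x => 1 / pib v *
            ((1 / qfull w Y V X y v x) * f v x - (1 / qV w Y V y v) * m v)),
          wsum_eq_wsum_qfull_mul hw0 hy (fun v x => piR w Y V R y v * (1 / pib v *
            ((1 / qfull w Y V X y v x) * f v x - (1 / qV w Y V y v) * m v)))]
    _ = wsum w (fun ω => Y ω ≠ ∅) (fun ω => c (V ω) * f (V ω) (X ω)
        - qfull w Y V X y (V ω) (X ω) * (c (V ω) * m (V ω) / qV w Y V y (V ω))) := by
        refine wsum_congr hw0 fun ω hω hS => ?_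
        obtain ⟨hqf, hqV⟩ := hq _ _ (pr_support_pos hw0 hω hS)
        have := hpib _ _ (pr_support_pos hw0 hω hS)
        simp only [c]
        field_simp
    _ = 0 := by rw [wsum_sub, hfm, hqm, sub_self]

theorem wsum_indicator_div_qV_mul (hw0 : ∀ ω, 0 ≤ w ω) (hy : y ≠ ∅)
    (hqV : ∀ (v : 𝒱) (x : 𝒳), 0 < pr w (fun ω => V ω = v ∧ X ω = x ∧ Y ω ≠ ∅) →
      0 < qV w Y V y v)
    (m : 𝒱 → ℝ) :
    wsum w (fun ω => Y ω ≠ ∅)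
        (fun ω => (if Y ω = y then (1 : ℝ) else 0) / qV w Y V y (V ω) * m (V ω))
      = wsum w (fun ω => Y ω ≠ ∅) (fun ω => m (V ω)) := by
  calc _ = wsum w (fun ω => Y ω = y) (fun ω => m (V ω) / qV w Y V y (V ω)) := by
        refine sum_congr rfl fun ω _ => ?_
        by_cases hY : Y ω = y <;> simp [hY, hy, div_eq_inv_mul]
    _ = wsum w (fun ω => Y ω ≠ ∅) (fun ω => qV w Y V y (V ω) * (m (V ω) / qV w Y V y (V ω))) :=
        wsum_eq_wsum_qV_mul hw0 hy (fun v => m v / qV w Y V y v)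
    _ = _ := wsum_congr hw0 fun ω hω hS => by
        have := hqV _ _ (pr_support_pos (X := X) hw0 hω hS)
        field_simp

end CaptureRecapture

theorem one_step_robust_to_propensity_general
    {Ω 𝒱 𝒳 : Type*} [Fintype Ω] {K : ℕ} (hK : 1 ≤ K)
    (w : Ω → ℝ) (Y : Ω → Finset (Fin K)) (V : Ω → 𝒱) (X : Ω → 𝒳) (R : Ω → Bool)
    (hw0 : ∀ ω, 0 ≤ w ω)
    -- MAR: X and R are conditionally independent given (V, Y) under Q
    (hMAR : ∀ (y : Finset (Fin K)) (v : 𝒱) (x : 𝒳) (r : Bool),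
      0 < pr w (fun ω => Y ω = y ∧ V ω = v ∧ Y ω ≠ ∅) →
      cpr w (fun ω => X ω = x ∧ R ω = r) (fun ω => Y ω = y ∧ V ω = v ∧ Y ω ≠ ∅)
        = cpr w (fun ω => X ω = x) (fun ω => Y ω = y ∧ V ω = v ∧ Y ω ≠ ∅)
          * cpr w (fun ω => R ω = r) (fun ω => Y ω = y ∧ V ω = v ∧ Y ω ≠ ∅))
    -- positivity of the true nuisance functions on the support
    (hpos : ∀ y : Finset (Fin K), y ≠ ∅ → ∀ (v : 𝒱) (x : 𝒳),
      0 < pr w (fun ω => V ω = v ∧ X ω = x ∧ Y ω ≠ ∅) →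
      0 < qfull w Y V X y v x ∧ 0 < qV w Y V y v ∧ 0 < piR w Y V R y v)
    -- arbitrary candidate missingness propensity, positive on the support
    (pib : Finset (Fin K) → 𝒱 → ℝ)
    (hpibpos : ∀ y : Finset (Fin K), y ≠ ∅ → ∀ (v : 𝒱) (x : 𝒳),
      0 < pr w (fun ω => V ω = v ∧ X ω = x ∧ Y ω ≠ ∅) → 0 < pib y v)
    -- gi v x = 1/γ(v,x) = 1 + Π_{y ≠ 0} q_y(v,x)^{(−1)^{|y|+1}}
    (gi : 𝒱 → 𝒳 → ℝ)
    -- m(v) = E_Q[1/γ(V,X) − 1 | V = v]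
    (m : 𝒱 → ℝ)
    (hm : ∀ v : 𝒱, m v
      = cexp w (fun ω => gi (V ω) (X ω) - 1) (fun ω => V ω = v ∧ Y ω ≠ ∅))
    -- the uncentered one-step functional φ̃ with true conditional probabilities and
    -- candidate propensity π̄
    (φt : Finset (Fin K) → 𝒱 → 𝒳 → Bool → ℝ)
    (hφt : ∀ (y : Finset (Fin K)) (v : 𝒱) (x : 𝒳) (r : Bool), φt y v x r
      = ∑ y' ∈ Finset.univ.filter (fun y' : Finset (Fin K) => y' ≠ ∅),
          (-1 : ℝ) ^ (1 + y'.card) *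
            (((if r = true then (1 : ℝ) else 0) * (if y = y' then (1 : ℝ) else 0))
                / pib y' v *
              ((1 / qfull w Y V X y' v x) * (gi v x - 1)
                - (1 / qV w Y V y' v) * m v)
            + (if y = y' then (1 : ℝ) else 0) / qV w Y V y' v * m v)) :
    cexp w (fun ω => φt (Y ω) (V ω) (X ω) (R ω)) (fun ω => Y ω ≠ ∅)
      = cexp w (fun ω => gi (V ω) (X ω) - 1) (fun ω => Y ω ≠ ∅) := by
  have : Nonempty (Fin K) := ⟨⟨0, hK⟩⟩
  rw [cexp_eq_wsum_div, cexp_eq_wsum_div]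
  congr 1
  calc _ = ∑ y ∈ univ.filter (fun y : Finset (Fin K) => y ≠ ∅),
        (-1 : ℝ) ^ (1 + #y) * wsum w (fun ω => Y ω ≠ ∅) (fun ω => m (V ω)) := by
        simp only [hφt, wsum_sum]
        refine sum_congr rfl fun y hy => ?_
        obtain ⟨-, hy⟩ := mem_filter.mp hy
        rw [wsum_const_mul, wsum_add,
          wsum_ipw_term_eq_zero hw0 hy (fun v x => hMAR y v x true)
            (fun v x h => ⟨(hpos y hy v x h).1, (hpos y hy v x h).2.1⟩) (pib y) (hpibpos y hy)
            (fun v x => gi v x - 1) m hm,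
          wsum_indicator_div_qV_mul hw0 hy (fun v x h => (hpos y hy v x h).2.1), zero_add]
    _ = wsum w (fun ω => Y ω ≠ ∅) (fun ω => m (V ω)) := by
        rw [← sum_mul, sum_filter_ne_empty_neg_one_pow_one_add_card, one_mul]
    _ = _ := by
        simpa [hm] using (wsum_comp_mul_eq_wsum_comp_mul_cexp hw0 V (fun _ => 1)
          (fun ω => gi (V ω) (X ω) - 1)).symm

/-- **Robustness of the one-step functional to the missingness
propensity.** In the capture-recapture setup, assume MAR and positivity, and let
`π̄(y,v) > 0` be an arbitrary candidate missingness propensity. Taking the candidate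
conditional probabilities equal to the truth, with
`1/γ(v,x) = 1 + Π_{y ≠ 0} q_y(v,x)^{(−1)^{|y|+1}}` (denoted `gi`),
`m(v) = E_Q[ 1/γ(V,X) − 1 | V=v ]`, and `φ̃` the uncentered one-step functional, it holds
that `E_Q[ φ̃(Y,V,X,R) ] = E_Q[ 1/γ(V,X) − 1 ]`, regardless of the choice of `π̄`. -/
theorem one_step_robust_to_propensity
    {Ω 𝒱 𝒳 : Type*} [Fintype Ω] {K : ℕ} (hK : 1 ≤ K)
    (w : Ω → ℝ) (Y : Ω → Finset (Fin K)) (V : Ω → 𝒱) (X : Ω → 𝒳) (R : Ω → Bool)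
    (hw0 : ∀ ω, 0 ≤ w ω) (hw1 : ∑ ω, w ω = 1)
    (hψ : 0 < pr w (fun ω => Y ω ≠ ∅))
    -- MAR: X and R are conditionally independent given (V, Y) under Q
    (hMAR : ∀ (y : Finset (Fin K)) (v : 𝒱) (x : 𝒳) (r : Bool),
      0 < pr w (fun ω => Y ω = y ∧ V ω = v ∧ Y ω ≠ ∅) →
      cpr w (fun ω => X ω = x ∧ R ω = r) (fun ω => Y ω = y ∧ V ω = v ∧ Y ω ≠ ∅)
        = cpr w (fun ω => X ω = x) (fun ω => Y ω = y ∧ V ω = v ∧ Y ω ≠ ∅)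
          * cpr w (fun ω => R ω = r) (fun ω => Y ω = y ∧ V ω = v ∧ Y ω ≠ ∅))
    -- positivity of the true nuisance functions on the support
    (hpos : ∀ y : Finset (Fin K), y ≠ ∅ → ∀ (v : 𝒱) (x : 𝒳),
      0 < pr w (fun ω => V ω = v ∧ X ω = x ∧ Y ω ≠ ∅) →
      0 < qfull w Y V X y v x ∧ 0 < qV w Y V y v ∧ 0 < piR w Y V R y v)
    -- arbitrary candidate missingness propensity, positive on the support
    (pib : Finset (Fin K) → 𝒱 → ℝ)
    (hpibpos : ∀ y : Finset (Fin K), y ≠ ∅ → ∀ (v : 𝒱) (x : 𝒳),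
      0 < pr w (fun ω => V ω = v ∧ X ω = x ∧ Y ω ≠ ∅) → 0 < pib y v)
    -- gi v x = 1/γ(v,x) = 1 + Π_{y ≠ 0} q_y(v,x)^{(−1)^{|y|+1}}
    (gi : 𝒱 → 𝒳 → ℝ)
    (hgi : ∀ (v : 𝒱) (x : 𝒳), gi v x
      = 1 + ∏ y ∈ Finset.univ.filter (fun y : Finset (Fin K) => y ≠ ∅),
          qfull w Y V X y v x ^ ((-1 : ℤ) ^ (y.card + 1)))
    -- m(v) = E_Q[1/γ(V,X) − 1 | V = v]
    (m : 𝒱 → ℝ)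
    (hm : ∀ v : 𝒱, m v
      = cexp w (fun ω => gi (V ω) (X ω) - 1) (fun ω => V ω = v ∧ Y ω ≠ ∅))
    -- the uncentered one-step functional φ̃ with true conditional probabilities and
    -- candidate propensity π̄
    (φt : Finset (Fin K) → 𝒱 → 𝒳 → Bool → ℝ)
    (hφt : ∀ (y : Finset (Fin K)) (v : 𝒱) (x : 𝒳) (r : Bool), φt y v x r
      = ∑ y' ∈ Finset.univ.filter (fun y' : Finset (Fin K) => y' ≠ ∅),
          (-1 : ℝ) ^ (1 + y'.card) *
            (((if r = true then (1 : ℝ) else 0) * (if y = y' then (1 : ℝ) else 0))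
                / pib y' v *
              ((1 / qfull w Y V X y' v x) * (gi v x - 1)
                - (1 / qV w Y V y' v) * m v)
            + (if y = y' then (1 : ℝ) else 0) / qV w Y V y' v * m v)) :
    cexp w (fun ω => φt (Y ω) (V ω) (X ω) (R ω)) (fun ω => Y ω ≠ ∅)
      = cexp w (fun ω => gi (V ω) (X ω) - 1) (fun ω => Y ω ≠ ∅) :=
  one_step_robust_to_propensity_general hK w Y V X R hw0 hMAR hpos pib hpibpos gi m hm φt hφt
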